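/- arXiv:1909.09228 — 3 statements merged into one kernel-verified Lean document; each statement's English description precedes it below -/
import Mathlib

section
/- As t → ∞, the uncertain likelihood ratio Λ_θ(t) converges almost surely to Λ̃ = [(R+K−1)! / ((K−1)! ∏_{k=1}^K r_k!)] · ∏_{k=1}^K (π*_k)^{r_k}. -/
/-!
By the strong law of large numbers applied to the indicators of `{ω = k}`, the empirical
frequencies `n_{kt} / t` converge almost surely to `π*_k`. Since `(r + n)! / (r! n!)` is the rising
factorial `(n + 1) ⋯ (n + r)` divided by `r!`, for `t ≥ 1`
`Λ_θ(t) = C · ∏ₖ [(n_{kt} + 1) ⋯ (n_{kt} + r_k) / t^{r_k}] / [(t + K) ⋯ (t + K + R - 1) / t^R]`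
with `C = (R+K−1)! / ((K−1)! ∏ₖ r_k!)`, using `R = ∑ₖ r_k`. A rising factorial of length `r`
evaluated at a point `u_t` with `u_t / t → a` is `(a t)^r (1 + o(1))`, so the numerator tends to
`∏ₖ (π*_k)^{r_k}` and the denominator to `1`.
-/

open MeasureTheory ProbabilityTheory Filter Finset

/-- Number of times category `k` was observed among the first `t` signals. -/
def sigCount {Ω : Type*} {K : ℕ} (X : ℕ → Ω → Fin K) (k : Fin K) (t : ℕ) (x : Ω) : ℕ :=
  ((Finset.range t).filter (fun τ => X τ x = k)).card

open Topology
open scoped Nat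

lemma tendsto_add_const_div_natCast {u : ℕ → ℕ} {a : ℝ}
    (h : Tendsto (fun t => (u t : ℝ) / t) atTop (𝓝 a)) (c : ℝ) :
    Tendsto (fun t => ((u t : ℝ) + c) / t) atTop (𝓝 a) := by
  simpa [add_div] using h.add (tendsto_const_div_atTop_nhds_zero_nat c)

lemma tendsto_ascFactorial_div_pow {u : ℕ → ℕ} {a : ℝ}
    (h : Tendsto (fun t => (u t : ℝ) / t) atTop (𝓝 a)) (r : ℕ) :
    Tendsto (fun t => ((u t).ascFactorial r : ℝ) / (t : ℝ) ^ r) atTop (𝓝 (a ^ r)) := by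
  have hprod (t : ℕ) : ((u t).ascFactorial r : ℝ) / (t : ℝ) ^ r =
      ∏ i ∈ range r, ((u t : ℝ) + i) / t := by
    rw [Nat.ascFactorial_eq_prod_range, prod_div_distrib, prod_const, card_range]
    push_cast
    rfl
  simp_rw [hprod]
  simpa using tendsto_finsetProd (range r) fun i _ => tendsto_add_const_div_natCast h i

lemma factorial_div_factorial_add (m R : ℕ) :
    (m ! : ℝ) / (m + R)! = ((m + 1).ascFactorial R : ℝ)⁻¹ := by
  rw [← Nat.factorial_mul_ascFactorial, Nat.cast_mul, div_mul_cancel_left₀ (by positivity)]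

lemma factorial_add_div_factorial_mul_factorial (r n : ℕ) :
    ((r + n)! : ℝ) / (r ! * n !) = (n + 1).ascFactorial r / r ! := by
  rw [add_comm, ← Nat.factorial_mul_ascFactorial, Nat.cast_mul, mul_comm (r ! : ℝ),
    mul_div_mul_left _ _ (by positivity)]

lemma uncertainLR_eq {K : ℕ} (r : Fin K → ℕ) (R : ℕ) (hR : R = ∑ k, r k) (n : Fin K → ℕ)
    {t : ℕ} (ht : 1 ≤ t) :
    (((t + K - 1)! * (R + K - 1)! : ℕ) : ℝ) / (((K - 1)! * (R + t + K - 1)! : ℕ) : ℝ) *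
        ∏ k, (((r k + n k)! : ℕ) : ℝ) / (((r k)! * (n k)! : ℕ) : ℝ) =
      ((R + K - 1)! : ℝ) / ((K - 1)! * ∏ k, ((r k)! : ℝ)) *
        (∏ k, ((n k + 1).ascFactorial (r k) : ℝ) / (t : ℝ) ^ r k) /
        (((t + K).ascFactorial R : ℝ) / (t : ℝ) ^ R) := by
  obtain ⟨m, hm⟩ : ∃ m, t + K - 1 = m ∧ R + t + K - 1 = m + R ∧ t + K = m + 1 :=
    ⟨_, rfl, by omega, by omega⟩
  have ht0 : (t : ℝ) ≠ 0 := by positivity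
  push_cast
  simp_rw [factorial_add_div_factorial_mul_factorial]
  rw [hm.1, hm.2.1, hm.2.2, mul_comm (m ! : ℝ), mul_div_mul_comm, factorial_div_factorial_add,
    hR, ← prod_pow_eq_pow_sum, prod_div_distrib, prod_div_distrib]
  field_simp

theorem tendsto_uncertainLR {K : ℕ} (π : Fin K → ℝ) (r : Fin K → ℕ) (R : ℕ) (hR : R = ∑ k, r k)
    (n : Fin K → ℕ → ℕ) (hn : ∀ k, Tendsto (fun t => (n k t : ℝ) / t) atTop (𝓝 (π k))) :
    Tendsto (fun t =>
        (((t + K - 1)! * (R + K - 1)! : ℕ) : ℝ) / (((K - 1)! * (R + t + K - 1)! : ℕ) : ℝ) *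
          ∏ k, (((r k + n k t)! : ℕ) : ℝ) / (((r k)! * (n k t)! : ℕ) : ℝ))
      atTop (𝓝 (((R + K - 1)! : ℝ) / ((K - 1)! * ∏ k, ((r k)! : ℝ)) * ∏ k, π k ^ r k)) := by
  have hnum (k : Fin K) : Tendsto (fun t => ((n k t + 1).ascFactorial (r k) : ℝ) / (t : ℝ) ^ r k)
      atTop (𝓝 (π k ^ r k)) :=
    tendsto_ascFactorial_div_pow (by simpa using tendsto_add_const_div_natCast (hn k) 1) (r k)
  have hden : Tendsto (fun t => ((t + K).ascFactorial R : ℝ) / (t : ℝ) ^ R) atTop (𝓝 1) := by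
    have hu : Tendsto (fun t : ℕ => ((t + K : ℕ) : ℝ) / t) atTop (𝓝 1) := by
      have hK := (tendsto_const_div_atTop_nhds_zero_nat (K : ℝ)).const_add 1
      rw [add_zero] at hK
      refine hK.congr' ((eventually_ne_atTop 0).mono fun t ht => ?_)
      push_cast
      field_simp
    simpa using tendsto_ascFactorial_div_pow hu R
  have hlim := ((tendsto_const_nhds (x := ((R + K - 1)! : ℝ) / ((K - 1)! * ∏ k, ((r k)! : ℝ)))).mul
    (tendsto_finsetProd univ fun k _ => hnum k)).div hden one_ne_zero
  rw [div_one] at hlim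
  refine hlim.congr' ((eventually_ge_atTop 1).mono fun t ht => ?_)
  exact (uncertainLR_eq r R hR (fun k => n k t) ht).symm

lemma identDistrib_of_measure_preimage_singleton {Ω Ω' α : Type*} [MeasurableSpace Ω]
    [MeasurableSpace Ω'] [MeasurableSpace α] [Countable α] [MeasurableSingletonClass α]
    {μ : Measure Ω} {ν : Measure Ω'} {X : Ω → α} {Y : Ω' → α}
    (hX : AEMeasurable X μ) (hY : AEMeasurable Y ν)
    (h : ∀ a, μ (X ⁻¹' {a}) = ν (Y ⁻¹' {a})) : IdentDistrib X Y μ ν where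
  aemeasurable_fst := hX
  aemeasurable_snd := hY
  map_eq := Measure.ext_of_singleton fun a => by
    rw [Measure.map_apply_of_aemeasurable hX (measurableSet_singleton a),
      Measure.map_apply_of_aemeasurable hY (measurableSet_singleton a), h]

theorem ae_tendsto_card_filter_mem_div {Ω α : Type*} [MeasurableSpace Ω] [MeasurableSpace α]
    {P : Measure Ω} [IsFiniteMeasure P] {X : ℕ → Ω → α}
    (hindep : Pairwise fun i j => X i ⟂ᵢ[P] X j) (hident : ∀ i, IdentDistrib (X i) (X 0) P P)
    {s : Set α} [DecidablePred (· ∈ s)] (hs : MeasurableSet s) :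
    ∀ᵐ x ∂P, Tendsto (fun t => (#{τ ∈ range t | X τ x ∈ s} : ℝ) / t) atTop
      (𝓝 (P.real (X 0 ⁻¹' s))) := by
  have hφ : Measurable (s.indicator (1 : α → ℝ)) := measurable_one.indicator hs
  have hX₀ : AEMeasurable (X 0) P := (hident 0).aemeasurable_fst
  have hmean : P[fun x => s.indicator 1 (X 0 x)] = P.real (X 0 ⁻¹' s) := by
    rw [← integral_map hX₀ hφ.aestronglyMeasurable, integral_indicator_one hs,
      map_measureReal_apply_of_aemeasurable hX₀ hs]
  have hint : Integrable (fun x => s.indicator (1 : α → ℝ) (X 0 x)) P :=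
    (integrable_map_measure hφ.aestronglyMeasurable hX₀).1
      ((integrable_const 1).indicator hs)
  have hslln := strong_law_ae_real (fun i x => s.indicator (1 : α → ℝ) (X i x)) hint
    (fun i j hij => (hindep hij).comp hφ hφ) fun i => (hident i).comp hφ
  filter_upwards [hslln] with x hx
  rw [← hmean]
  simpa [Set.indicator_apply] using hx

theorem uncertainLR_tendsto_ae_general
    {Ω : Type*} [MeasurableSpace Ω] (P : Measure Ω) [IsProbabilityMeasure P]
    (K : ℕ)
    (π : Fin K → ℝ) (hπ_pos : ∀ k, 0 < π k)
    (X : ℕ → Ω → Fin K) (hX_meas : ∀ t, Measurable (X t))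
    (hX_indep : iIndepFun X P)
    (hX_law : ∀ t k, P {x | X t x = k} = ENNReal.ofReal (π k))
    (r : Fin K → ℕ) (R : ℕ) (hR : R = ∑ k, r k) :
    ∀ᵐ x ∂P, Tendsto
      (fun t =>
        (((t + K - 1).factorial * (R + K - 1).factorial : ℕ) : ℝ) /
            (((K - 1).factorial * (R + t + K - 1).factorial : ℕ) : ℝ) *
          ∏ k, (((r k + sigCount X k t x).factorial : ℕ) : ℝ) /
            (((r k).factorial * (sigCount X k t x).factorial : ℕ) : ℝ))
      atTop
      (nhds ((((R + K - 1).factorial : ℕ) : ℝ) /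
          ((((K - 1).factorial : ℕ) : ℝ) * ∏ k, (((r k).factorial : ℕ) : ℝ)) *
        ∏ k, π k ^ r k)) := by
  have hident (t : ℕ) : IdentDistrib (X t) (X 0) P P :=
    identDistrib_of_measure_preimage_singleton (hX_meas t).aemeasurable (hX_meas 0).aemeasurable
      fun k => (hX_law t k).trans (hX_law 0 k).symm
  have hfreq : ∀ᵐ x ∂P, ∀ k, Tendsto (fun t => (sigCount X k t x : ℝ) / t) atTop (𝓝 (π k)) := by
    refine ae_all_iff.2 fun k => ?_
    have hπ : P.real (X 0 ⁻¹' {k}) = π k :=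
      (congrArg ENNReal.toReal (hX_law 0 k)).trans (ENNReal.toReal_ofReal (hπ_pos k).le)
    simpa [hπ, sigCount] using ae_tendsto_card_filter_mem_div
      (fun _ _ hij => hX_indep.indepFun hij) hident (measurableSet_singleton k)
  filter_upwards [hfreq] with x hx
  exact tendsto_uncertainLR π r R hR _ hx

/-- The uncertain likelihood ratio `Λ_θ(t)` converges almost surely to
`Λ̃ = [(R+K−1)!/((K−1)! ∏ₖ rₖ!)] ∏ₖ (π*ₖ)^{rₖ}`. -/
theorem uncertainLR_tendsto_ae
    {Ω : Type*} [MeasurableSpace Ω] (P : Measure Ω) [IsProbabilityMeasure P]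
    (K : ℕ) (hK : 2 ≤ K)
    (π : Fin K → ℝ) (hπ_pos : ∀ k, 0 < π k) (hπ_sum : ∑ k, π k = 1)
    (X : ℕ → Ω → Fin K) (hX_meas : ∀ t, Measurable (X t))
    (hX_indep : iIndepFun X P)
    (hX_law : ∀ t k, P {x | X t x = k} = ENNReal.ofReal (π k))
    (r : Fin K → ℕ) (R : ℕ) (hR : R = ∑ k, r k) :
    ∀ᵐ x ∂P, Tendsto
      (fun t =>
        (((t + K - 1).factorial * (R + K - 1).factorial : ℕ) : ℝ) /
            (((K - 1).factorial * (R + t + K - 1).factorial : ℕ) : ℝ) *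
          ∏ k, (((r k + sigCount X k t x).factorial : ℕ) : ℝ) /
            (((r k).factorial * (sigCount X k t x).factorial : ℕ) : ℝ))
      atTop
      (nhds ((((R + K - 1).factorial : ℕ) : ℝ) /
          ((((K - 1).factorial : ℕ) : ℝ) * ∏ k, (((r k).factorial : ℕ) : ℝ)) *
        ∏ k, π k ^ r k)) :=
  uncertainLR_tendsto_ae_general P K π hπ_pos X hX_meas hX_indep hX_law r R hR
end

section
/- If there exists at least one agent i with π_{iθ} ≠ π*_i, then for every agent i the log-linear belief μ_{it} converges to 0 in probability as t → ∞, i.e., for every ε > 0, P(μ_{it} > ε) → 0. -/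
open MeasureTheory ProbabilityTheory Filter Finset

/-!
Taking logarithms turns the log-linear rule into the linear recursion
`log μ_{t+1} = log ℓ_{t+1} + A log μ_t`, so `log μ_t = ∑_{s<t} A^s log ℓ_{t-s}`. A doubly
stochastic primitive `A` has `A^s → (1/m) 𝟙𝟙ᵀ` geometrically fast and `|log ℓ_{js}| = O(log t)`,
so up to `O(log t)` every `log μ_{it}` is the network average `(1/m) ∑_j ∑_{s<t} log ℓ_{js}`.
In terms of the category counts, `∏_{s<t} ℓ_{js}` is the likelihood ratio
`∏_{s<t} π_{jθ}(ω_{js}) / π*_j(ω_{js})` times a multinomial probability times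
`C(t + K - 1, K - 1) ≤ (t + K)^(K-1)`. The square root of the joint likelihood ratio has
expectation `ρ^t`, where `ρ < 1` is the product of the Hellinger affinities of `π_{jθ}` and
`π*_j`, and Markov's inequality gives `P(μ_{it} > ε) ≤ poly(t) ρ^t → 0`.
-/

open Matrix

section Mixing

variable {n : Type*} [Fintype n]

lemma mulVec_apply_le_sub_mul {δ c : ℝ} {B : Matrix n n ℝ} (hδ : 0 ≤ δ) (hB : ∀ i k, δ ≤ B i k)
    (hrow : ∀ i, ∑ k, B i k = 1) {v : n → ℝ} (hv : ∀ k, v k ≤ c) (i k₀ : n) :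
    (B *ᵥ v) i ≤ c - δ * (c - v k₀) := by
  classical
  have hterm : ∀ k, B i k * (v k - c) ≤ 0 := fun k =>
    mul_nonpos_of_nonneg_of_nonpos (hδ.trans (hB i k)) (sub_nonpos.2 (hv k))
  have hsum : ∑ k, B i k * (v k - c) ≤ B i k₀ * (v k₀ - c) := by
    rw [← add_sum_erase _ _ (mem_univ k₀)]
    linarith [sum_nonpos fun k (_ : k ∈ univ.erase k₀) => hterm k]
  have hexpand : ∑ k, B i k * (v k - c) = (B *ᵥ v) i - c := by
    simp only [mul_sub, sum_sub_distrib, ← sum_mul, hrow, one_mul, mulVec, dotProduct]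
  nlinarith [hB i k₀, hv k₀]

noncomputable def spread {ι : Type*} (v : ι → ℝ) : ℝ := (⨆ i, v i) - ⨅ i, v i

lemma ciInf_le_of_finite {ι : Type*} [Finite ι] (v : ι → ℝ) (i : ι) : (⨅ i, v i) ≤ v i :=
  ciInf_le (Finite.bddBelow_range v) i

lemma le_ciSup_of_finite {ι : Type*} [Finite ι] (v : ι → ℝ) (i : ι) : v i ≤ ⨆ i, v i :=
  le_ciSup (Finite.bddAbove_range v) i

lemma spread_nonneg {ι : Type*} [Finite ι] [Nonempty ι] (v : ι → ℝ) : 0 ≤ spread v :=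
  sub_nonneg.2 ((ciInf_le_of_finite v (Classical.arbitrary ι)).trans (le_ciSup_of_finite v _))

lemma spread_le_one {ι : Type*} [Nonempty ι] {v : ι → ℝ} (h0 : ∀ i, 0 ≤ v i) (h1 : ∀ i, v i ≤ 1) :
    spread v ≤ 1 := by
  have := ciSup_le h1
  have := le_ciInf h0
  rw [spread]
  linarith

variable [Nonempty n]

lemma abs_sub_inv_card_le_spread {v : n → ℝ} (hv : ∑ i, v i = 1) (i : n) :
    |v i - (Fintype.card n : ℝ)⁻¹| ≤ spread v := by
  have hcard : (0 : ℝ) < Fintype.card n := by exact_mod_cast Fintype.card_pos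
  have hlo := card_nsmul_le_sum univ v _ fun i _ => ciInf_le_of_finite v i
  have hhi := sum_le_card_nsmul univ v _ fun i _ => le_ciSup_of_finite v i
  rw [hv, nsmul_eq_mul, card_univ] at hlo hhi
  have hlo' : (⨅ i, v i) ≤ (Fintype.card n : ℝ)⁻¹ := by
    rw [← one_div, le_div_iff₀ hcard]; linarith
  have hhi' : (Fintype.card n : ℝ)⁻¹ ≤ ⨆ i, v i := by
    rw [← one_div, div_le_iff₀ hcard]; linarith
  have := ciInf_le_of_finite v i
  have := le_ciSup_of_finite v i
  rw [spread, abs_sub_le_iff]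
  constructor <;> linarith

lemma spread_mulVec_le {δ : ℝ} {B : Matrix n n ℝ} (hδ : 0 ≤ δ) (hB : ∀ i k, δ ≤ B i k)
    (hrow : ∀ i, ∑ k, B i k = 1) (v : n → ℝ) : spread (B *ᵥ v) ≤ (1 - 2 * δ) * spread v := by
  obtain ⟨kmin, hkmin⟩ := exists_eq_ciInf_of_finite (f := v)
  obtain ⟨kmax, hkmax⟩ := exists_eq_ciSup_of_finite (f := v)
  have hupper : ∀ i, (B *ᵥ v) i ≤ (⨆ i, v i) - δ * spread v := fun i => by
    simpa [spread, hkmin] using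
      mulVec_apply_le_sub_mul hδ hB hrow (le_ciSup_of_finite v) i kmin
  have hlower : ∀ i, (⨅ i, v i) + δ * spread v ≤ (B *ᵥ v) i := fun i => by
    have := mulVec_apply_le_sub_mul (v := -v) hδ hB hrow
      (fun k => neg_le_neg (ciInf_le_of_finite v k)) i kmax
    rw [mulVec_neg] at this
    simp only [Pi.neg_apply] at this
    rw [spread, ← hkmax]
    linarith
  have hsup : (⨆ i, (B *ᵥ v) i) ≤ (⨆ i, v i) - δ * spread v := ciSup_le hupper
  have hinf : (⨅ i, v i) + δ * spread v ≤ ⨅ i, (B *ᵥ v) i := le_ciInf hlower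
  simp only [spread] at hsup hinf ⊢
  linarith

lemma sum_range_le_div_of_le_mul {φ : ℕ → ℝ} {N : ℕ} {γ : ℝ} (hγ : γ < 1)
    (h0 : ∀ k, 0 ≤ φ k) (h1 : ∀ k, φ k ≤ 1) (hφ : ∀ k, φ (k + N) ≤ γ * φ k) (t : ℕ) :
    ∑ k ∈ range t, φ k ≤ N / (1 - γ) := by
  have hhead : ∑ k ∈ range N, φ k ≤ N := by
    simpa using sum_le_sum fun k (_ : k ∈ range N) => h1 k
  have htail : ∑ k ∈ range t, φ (N + k) ≤ γ * ∑ k ∈ range t, φ k := by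
    rw [mul_sum]
    exact sum_le_sum fun k _ => add_comm N k ▸ hφ k
  have hext : ∑ k ∈ range t, φ k ≤ ∑ k ∈ range (N + t), φ k :=
    sum_le_sum_of_subset_of_nonneg (range_subset_range.2 (by omega)) fun k _ _ => h0 k
  rw [sum_range_add] at hext
  rw [le_div_iff₀ (by linarith)]
  linarith

variable [DecidableEq n]

/-- The columns of `A ^ s` flatten geometrically: `A ^ N` has all entries `≥ δ > 0`, so
each block of `N` steps multiplies the spread of every column by `1 - 2δ`. -/
theorem exists_sum_abs_pow_sub_inv_card_le {A : Matrix n n ℝ} (hA : A ∈ doublyStochastic ℝ n)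
    {N : ℕ} (hN : ∀ i j, 0 < (A ^ N) i j) :
    ∃ C, ∀ i t, ∑ s ∈ range t, ∑ j, |(A ^ s) i j - (Fintype.card n : ℝ)⁻¹| ≤ C := by
  obtain ⟨⟨i₀, j₀⟩, hmin⟩ := Finite.exists_min fun p : n × n => (A ^ N) p.1 p.2
  set δ := (A ^ N) i₀ j₀
  have hpow : ∀ s, A ^ s ∈ doublyStochastic ℝ n := fun s => pow_mem hA s
  set col : n → ℕ → ℝ := fun j s => spread fun i => (A ^ s) i j
  have hcontract : ∀ j s, col j (s + N) ≤ (1 - 2 * δ) * col j s := fun j s => by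
    have hcol : (fun i => (A ^ (s + N)) i j) = A ^ N *ᵥ fun k => (A ^ s) k j := by
      ext i; rw [add_comm, pow_add, mul_apply]; rfl
    simp only [col, hcol]
    exact spread_mulVec_le (hN i₀ j₀).le (fun i k => hmin (i, k))
      (sum_row_of_mem_doublyStochastic (hpow N)) _
  have hsum : ∀ j t, ∑ s ∈ range t, col j s ≤ N / (2 * δ) := fun j t => by
    simpa using sum_range_le_div_of_le_mul (γ := 1 - 2 * δ) (by linarith [hN i₀ j₀])
      (fun s => spread_nonneg _)
      (fun s => spread_le_one (fun i => nonneg_of_mem_doublyStochastic (hpow s))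
        fun i => le_one_of_mem_doublyStochastic (hpow s))
      (hcontract j) t
  refine ⟨Fintype.card n * (N / (2 * δ)), fun i t => ?_⟩
  calc ∑ s ∈ range t, ∑ j, |(A ^ s) i j - (Fintype.card n : ℝ)⁻¹|
      ≤ ∑ s ∈ range t, ∑ j, col j s := sum_le_sum fun s _ => sum_le_sum fun j _ =>
        abs_sub_inv_card_le_spread (sum_col_of_mem_doublyStochastic (hpow s) j) i
    _ = ∑ j, ∑ s ∈ range t, col j s := sum_comm
    _ ≤ ∑ _j : n, N / (2 * δ) := sum_le_sum fun j _ => hsum j t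
    _ = _ := by simp

end Mixing

section LogLinear

variable {n : Type*} [Fintype n] [DecidableEq n]

lemma eq_sum_pow_mulVec_of_eq_add_mulVec {R : Type*} [Semiring R] (A : Matrix n n R)
    {L g : ℕ → n → R} (h0 : L 0 = 0) (hsucc : ∀ t, L (t + 1) = g t + A *ᵥ L t) (t : ℕ) :
    L t = ∑ s ∈ range t, A ^ s *ᵥ g (t - 1 - s) := by
  induction t with
  | zero => simp [h0]
  | succ t ih =>
    rw [hsucc, ih, sum_range_succ', mulVec_sum]
    simp only [mulVec_mulVec, ← pow_succ', pow_zero, one_mulVec, Nat.add_sub_cancel,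
      Nat.sub_zero]
    rw [add_comm]
    congr 2 with s
    congr 2
    omega

lemma sum_pow_mulVec_apply_le (A : Matrix n n ℝ) (g : ℕ → n → ℝ) {c C b : ℝ} {t : ℕ} {i : n}
    (hC : ∑ s ∈ range t, ∑ j, |(A ^ s) i j - c| ≤ C) (hb : 0 ≤ b)
    (hg : ∀ s < t, ∀ j, |g s j| ≤ b) :
    (∑ s ∈ range t, A ^ s *ᵥ g (t - 1 - s)) i ≤ c * ∑ s ∈ range t, ∑ j, g s j + C * b := by
  have hterm : ∀ s ∈ range t, (A ^ s *ᵥ g (t - 1 - s)) i ≤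
      c * ∑ j, g (t - 1 - s) j + (∑ j, |(A ^ s) i j - c|) * b := by
    intro s hs
    have hs' : t - 1 - s < t := by have := mem_range.1 hs; omega
    have hsplit : (A ^ s *ᵥ g (t - 1 - s)) i =
        c * ∑ j, g (t - 1 - s) j + ∑ j, ((A ^ s) i j - c) * g (t - 1 - s) j := by
      simp only [mulVec, dotProduct, mul_sum, ← sum_add_distrib]
      exact sum_congr rfl fun j _ => by ring
    rw [hsplit, sum_mul]
    refine add_le_add_right (sum_le_sum fun j _ => ?_) _
    calc ((A ^ s) i j - c) * g (t - 1 - s) j ≤ |(A ^ s) i j - c| * |g (t - 1 - s) j| := by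
          rw [← abs_mul]; exact le_abs_self _
      _ ≤ |(A ^ s) i j - c| * b := by gcongr; exact hg _ hs' j
  rw [Finset.sum_apply]
  calc ∑ s ∈ range t, (A ^ s *ᵥ g (t - 1 - s)) i
      ≤ ∑ s ∈ range t, (c * ∑ j, g (t - 1 - s) j + (∑ j, |(A ^ s) i j - c|) * b) :=
        sum_le_sum hterm
    _ ≤ c * ∑ s ∈ range t, ∑ j, g s j + C * b := by
        rw [sum_add_distrib, ← mul_sum, ← sum_mul,
          sum_range_reflect (fun s => ∑ j, g s j) t]
        gcongr

theorem log_le_of_loglinear {A : Matrix n n ℝ} {μ u : ℕ → n → ℝ} (hu : ∀ t i, 0 < u t i)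
    (hμ0 : ∀ i, μ 0 i = 1) (hμ : ∀ t i, μ (t + 1) i = u t i * ∏ j, μ t j ^ A i j)
    {c C b : ℝ} {t : ℕ} {i : n} (hC : ∑ s ∈ range t, ∑ j, |(A ^ s) i j - c| ≤ C) (hb : 0 ≤ b)
    (hub : ∀ s < t, ∀ j, |Real.log (u s j)| ≤ b) :
    Real.log (μ t i) ≤ c * ∑ j, ∑ s ∈ range t, Real.log (u s j) + C * b := by
  have hpos : ∀ t i, 0 < μ t i := by
    intro t
    induction t with
    | zero => simp [hμ0]
    | succ t ih =>
      intro i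
      rw [hμ]
      exact mul_pos (hu t i) (prod_pos fun j _ => Real.rpow_pos_of_pos (ih j) _)
  have hlog : ∀ t, (fun i => Real.log (μ t i)) =
      ∑ s ∈ range t, A ^ s *ᵥ fun j => Real.log (u (t - 1 - s) j) := by
    refine eq_sum_pow_mulVec_of_eq_add_mulVec (L := fun t i => Real.log (μ t i))
      (g := fun t j => Real.log (u t j)) A (funext fun i => by simp [hμ0]) fun t => ?_
    ext i
    rw [hμ, Real.log_mul (hu t i).ne' (prod_pos fun j _ => Real.rpow_pos_of_pos (hpos t j) _).ne',
      Real.log_prod fun j _ => (Real.rpow_pos_of_pos (hpos t j) _).ne']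
    simp only [Real.log_rpow (hpos t _), Pi.add_apply, mulVec, dotProduct]
  have := sum_pow_mulVec_apply_le A (fun s j => Real.log (u s j)) hC hb hub
  rw [← hlog, sum_comm] at this
  exact this

end LogLinear

lemma factorial_sum_mul_prod_pow_le_prod_factorial {α : Type*} [Fintype α] [DecidableEq α]
    {p : α → ℝ} (hp0 : ∀ k, 0 ≤ p k) (hp1 : ∑ k, p k = 1) (f : α → ℕ) :
    ((∑ k, f k).factorial : ℝ) * ∏ k, p k ^ f k ≤ ∏ k, ((f k).factorial : ℝ) := by
  have hterm : (Nat.multinomial univ f : ℝ) * ∏ k, p k ^ f k ≤ 1 := by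
    have hexp := sum_pow_eq_sum_piAntidiag univ p (∑ k, f k)
    rw [hp1, one_pow] at hexp
    rw [hexp]
    exact single_le_sum (f := fun g => (Nat.multinomial univ g : ℝ) * ∏ k, p k ^ g k)
      (fun g _ => mul_nonneg (Nat.cast_nonneg _) (prod_nonneg fun k _ => pow_nonneg (hp0 k) _))
      (mem_piAntidiag.2 ⟨rfl, fun k _ => mem_univ k⟩)
  calc ((∑ k, f k).factorial : ℝ) * ∏ k, p k ^ f k
      = (∏ k, ((f k).factorial : ℝ)) * ((Nat.multinomial univ f : ℝ) * ∏ k, p k ^ f k) := by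
        rw [← Nat.multinomial_spec]; push_cast; ring
    _ ≤ ∏ k, ((f k).factorial : ℝ) := by
        have : (0 : ℝ) ≤ ∏ k, ((f k).factorial : ℝ) := by positivity
        nlinarith

lemma prod_range_add_le (K t : ℕ) :
    ∏ s ∈ range t, ((s : ℝ) + K) ≤ t.factorial * ((t : ℝ) + K) ^ (K - 1) := by
  have hnat : ∏ s ∈ range t, (K + s) ≤ t.factorial * (t + K) ^ (K - 1) := by
    rw [← Nat.ascFactorial_eq_prod_range, Nat.ascFactorial_eq_factorial_mul_choose']
    gcongr
    rcases Nat.eq_zero_or_pos K with rfl | hK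
    · rcases t with _ | t <;> simp
    · calc (K + t - 1).choose t = (K - 1 + t).choose (K - 1) := by
            rw [Nat.choose_symm_add, show K + t - 1 = K - 1 + t by omega]
        _ ≤ (K - 1 + t) ^ (K - 1) := Nat.choose_le_pow _ _
        _ ≤ (t + K) ^ (K - 1) := Nat.pow_le_pow_left (by omega) _
  calc ∏ s ∈ range t, ((s : ℝ) + K) = ((∏ s ∈ range t, (K + s) : ℕ) : ℝ) := by
        push_cast; exact prod_congr rfl fun s _ => add_comm _ _
    _ ≤ _ := by exact_mod_cast hnat

section Counting

variable {Ω : Type*} {K : ℕ} (X : ℕ → Ω → Fin K) (x : Ω)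

lemma sigCount_succ (k : Fin K) (t : ℕ) :
    sigCount X k (t + 1) x = sigCount X k t x + if X t x = k then 1 else 0 := by
  unfold sigCount
  rw [range_add_one, filter_insert]
  split_ifs
  · rw [card_insert_of_notMem (by simp)]
  · rfl

lemma sigCount_le (k : Fin K) (t : ℕ) : sigCount X k t x ≤ t :=
  (card_filter_le _ _).trans (card_range t).le

lemma sum_sigCount (t : ℕ) : ∑ k, sigCount X k t x = t := by
  have := card_eq_sum_card_fiberwise (f := fun s => X s x) (s := range t) (t := univ)
    fun s _ => mem_univ _
  rw [card_range] at this
  exact this.symm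

lemma prod_range_comp_eq_prod_pow_sigCount {M : Type*} [CommMonoid M] (f : Fin K → M) (t : ℕ) :
    ∏ s ∈ range t, f (X s x) = ∏ k, f k ^ sigCount X k t x := by
  rw [← prod_fiberwise' (range t) (fun s => X s x) f]
  exact prod_congr rfl fun k _ => prod_const _

lemma prod_range_sigCount_add_one (t : ℕ) :
    ∏ s ∈ range t, (sigCount X (X s x) s x + 1) = ∏ k, (sigCount X k t x).factorial := by
  induction t with
  | zero => simp [sigCount]
  | succ t ih =>
    have hfac : ∀ k, (sigCount X k (t + 1) x).factorial =
        (sigCount X k t x).factorial * if X t x = k then sigCount X k t x + 1 else 1 := by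
      intro k
      rw [sigCount_succ]
      split_ifs
      · rw [Nat.factorial_succ, mul_comm]
      · simp
    rw [prod_range_succ, ih, prod_congr rfl fun k _ => hfac k, prod_mul_distrib,
      prod_ite_eq univ (X t x)]
    simp

end Counting

section CertainLikelihood

variable {Ω : Type*} {K : ℕ}

/-- The certain update `ℓ(t + 1, ω_{t+1})`; the signal at time `t + 1` is `X t`. -/
noncomputable def certainLikelihood (π : Fin K → ℝ) (X : ℕ → Ω → Fin K) (t : ℕ) (x : Ω) : ℝ :=
  π (X t x) * ((t + 1 + K - 1 : ℕ) : ℝ) / ((sigCount X (X t x) t x + 1 : ℕ) : ℝ)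

variable (π : Fin K → ℝ) (X : ℕ → Ω → Fin K) (x : Ω)

lemma certainLikelihood_eq (t : ℕ) :
    certainLikelihood π X t x = π (X t x) * ((t : ℝ) + K) / (sigCount X (X t x) t x + 1) := by
  rw [certainLikelihood, show t + 1 + K - 1 = t + K by omega]
  push_cast
  rfl

lemma certainLikelihood_pos (hπ : ∀ k, 0 < π k) (t : ℕ) : 0 < certainLikelihood π X t x := by
  have hK : (0 : ℝ) < K := by exact_mod_cast (X t x).pos
  rw [certainLikelihood_eq]
  exact div_pos (mul_pos (hπ _) (by positivity)) (by positivity)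

lemma le_certainLikelihood (hπ : ∀ k, 0 ≤ π k) (t : ℕ) : π (X t x) ≤ certainLikelihood π X t x := by
  have hK : (1 : ℝ) ≤ K := by exact_mod_cast (X t x).pos
  have hcount : (sigCount X (X t x) t x : ℝ) ≤ t := by exact_mod_cast sigCount_le X x _ t
  rw [certainLikelihood_eq, le_div_iff₀ (by positivity)]
  exact mul_le_mul_of_nonneg_left (by linarith) (hπ _)

lemma certainLikelihood_le (hπ1 : ∀ k, π k ≤ 1) (t : ℕ) : certainLikelihood π X t x ≤ t + K := by
  rw [certainLikelihood_eq, div_le_iff₀ (by positivity)]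
  have : (0 : ℝ) ≤ sigCount X (X t x) t x := Nat.cast_nonneg _
  nlinarith [hπ1 (X t x)]

lemma prod_certainLikelihood_le (hπ0 : ∀ k, 0 ≤ π k) (hπ1 : ∑ k, π k = 1) (t : ℕ) :
    ∏ s ∈ range t, certainLikelihood π X s x ≤ ((t : ℝ) + K) ^ (K - 1) := by
  set count := fun k => sigCount X k t x
  have hfac : (0 : ℝ) < ∏ k, ((count k).factorial : ℝ) := by positivity
  have hpow : (0 : ℝ) ≤ ∏ k, π k ^ count k := prod_nonneg fun k _ => pow_nonneg (hπ0 k) _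
  have hmult := factorial_sum_mul_prod_pow_le_prod_factorial hπ0 hπ1 count
  rw [sum_sigCount] at hmult
  calc ∏ s ∈ range t, certainLikelihood π X s x
      = (∏ k, π k ^ count k) * (∏ s ∈ range t, ((s : ℝ) + K)) / ∏ k, ((count k).factorial : ℝ) := by
        simp only [certainLikelihood_eq, prod_div_distrib, prod_mul_distrib,
          prod_range_comp_eq_prod_pow_sigCount X x π, count]
        rw [← Nat.cast_prod, ← prod_range_sigCount_add_one X x t]
        push_cast
        rfl
    _ ≤ (∏ k, π k ^ count k) * (t.factorial * ((t : ℝ) + K) ^ (K - 1)) /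
          ∏ k, ((count k).factorial : ℝ) := by
        gcongr
        exact prod_range_add_le K t
    _ = (t.factorial * ∏ k, π k ^ count k) / (∏ k, ((count k).factorial : ℝ)) *
          ((t : ℝ) + K) ^ (K - 1) := by ring
    _ ≤ 1 * ((t : ℝ) + K) ^ (K - 1) := by
        gcongr
        exact (div_le_one hfac).2 hmult
    _ = _ := one_mul _

lemma sum_log_certainLikelihood_le {p q : Fin K → ℝ} (hp : ∀ k, 0 < p k) (hq : ∀ k, 0 < q k)
    (hq1 : ∑ k, q k = 1) (t : ℕ) :
    ∑ s ∈ range t, Real.log (certainLikelihood p X s x) ≤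
      (K - 1 : ℕ) * Real.log ((t : ℝ) + K) + ∑ s ∈ range t, Real.log (p (X s x) / q (X s x)) := by
  have hratio : ∀ s, certainLikelihood p X s x =
      certainLikelihood q X s x * (p (X s x) / q (X s x)) := fun s => by
    simp only [certainLikelihood]
    field_simp [(hq (X s x)).ne']
  have hprod := prod_certainLikelihood_le q X x (fun k => (hq k).le) hq1 t
  have hlog := Real.log_le_log (prod_pos fun s _ => certainLikelihood_pos q X x hq s) hprod
  rw [Real.log_prod fun s _ => (certainLikelihood_pos q X x hq s).ne', Real.log_pow] at hlog
  simp only [hratio, Real.log_mul (certainLikelihood_pos q X x hq _).ne'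
    (div_pos (hp _) (hq _)).ne', sum_add_distrib]
  linarith

lemma abs_log_certainLikelihood_le {δ : ℝ} (hδ : 0 < δ) (hδπ : ∀ k, δ ≤ π k) (hπ1 : ∀ k, π k ≤ 1)
    {s t : ℕ} (hst : s < t) :
    |Real.log (certainLikelihood π X s x)| ≤ Real.log ((t : ℝ) + K) - Real.log δ := by
  have hπ0 : ∀ k, 0 ≤ π k := fun k => hδ.le.trans (hδπ k)
  have hlo : δ ≤ certainLikelihood π X s x := (hδπ _).trans (le_certainLikelihood π X x hπ0 s)
  have hhi : certainLikelihood π X s x ≤ t + K :=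
    (certainLikelihood_le π X x hπ1 s).trans (by gcongr)
  have hK : (1 : ℝ) ≤ K := by exact_mod_cast (X s x).pos
  have hlogδ : Real.log δ ≤ 0 := Real.log_nonpos hδ.le ((hδπ (X s x)).trans (hπ1 _))
  have hlogt : 0 ≤ Real.log ((t : ℝ) + K) := Real.log_nonneg (by linarith [t.cast_nonneg (α := ℝ)])
  have h1 := Real.log_le_log hδ hlo
  have h2 := Real.log_le_log (hδ.trans_le hlo) hhi
  rw [abs_le]
  constructor <;> linarith

end CertainLikelihood

section Hellinger

variable {α : Type*} [Fintype α]

noncomputable def hellingerAffinity (p q : α → ℝ) : ℝ := ∑ k, √(p k * q k)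

lemma hellingerAffinity_nonneg (p q : α → ℝ) : 0 ≤ hellingerAffinity p q :=
  sum_nonneg fun _ _ => Real.sqrt_nonneg _

variable {p q : α → ℝ}

lemma hellingerAffinity_pos [Nonempty α] (hp : ∀ k, 0 < p k) (hq : ∀ k, 0 < q k) :
    0 < hellingerAffinity p q :=
  sum_pos (fun k _ => Real.sqrt_pos.2 (mul_pos (hp k) (hq k))) univ_nonempty

lemma sum_sq_sqrt_sub_sqrt (hp0 : ∀ k, 0 ≤ p k) (hq0 : ∀ k, 0 ≤ q k) (hp1 : ∑ k, p k = 1)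
    (hq1 : ∑ k, q k = 1) : ∑ k, (√(p k) - √(q k)) ^ 2 = 2 - 2 * hellingerAffinity p q := by
  have hterm : ∀ k, (√(p k) - √(q k)) ^ 2 = p k + q k - 2 * √(p k * q k) := fun k => by
    rw [sub_sq, Real.sq_sqrt (hp0 k), Real.sq_sqrt (hq0 k), Real.sqrt_mul (hp0 k)]
    ring
  simp only [hterm, sum_sub_distrib, sum_add_distrib, hp1, hq1, ← mul_sum, hellingerAffinity]
  ring

lemma hellingerAffinity_le_one (hp0 : ∀ k, 0 ≤ p k) (hq0 : ∀ k, 0 ≤ q k) (hp1 : ∑ k, p k = 1)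
    (hq1 : ∑ k, q k = 1) : hellingerAffinity p q ≤ 1 := by
  have := sum_sq_sqrt_sub_sqrt hp0 hq0 hp1 hq1
  linarith [sum_nonneg fun k (_ : k ∈ univ) => sq_nonneg (√(p k) - √(q k))]

lemma hellingerAffinity_lt_one (hp0 : ∀ k, 0 ≤ p k) (hq0 : ∀ k, 0 ≤ q k) (hp1 : ∑ k, p k = 1)
    (hq1 : ∑ k, q k = 1) (hpq : p ≠ q) : hellingerAffinity p q < 1 := by
  refine (hellingerAffinity_le_one hp0 hq0 hp1 hq1).lt_of_ne fun h => hpq (funext fun k => ?_)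
  have hzero : ∑ k, (√(p k) - √(q k)) ^ 2 = 0 := by
    rw [sum_sq_sqrt_sub_sqrt hp0 hq0 hp1 hq1, h]; ring
  have hk := (sum_eq_zero_iff_of_nonneg fun k _ => sq_nonneg (√(p k) - √(q k))).1 hzero k
    (mem_univ k)
  rw [← Real.sq_sqrt (hp0 k), ← Real.sq_sqrt (hq0 k),
    sub_eq_zero.1 (pow_eq_zero_iff two_ne_zero |>.1 hk)]

lemma prod_hellingerAffinity_lt_one {ι : Type*} [Fintype ι] {p q : ι → α → ℝ}
    (hp0 : ∀ i k, 0 ≤ p i k) (hq0 : ∀ i k, 0 ≤ q i k) (hp1 : ∀ i, ∑ k, p i k = 1)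
    (hq1 : ∀ i, ∑ k, q i k = 1) (hpq : ∃ i, p i ≠ q i) :
    ∏ i, hellingerAffinity (p i) (q i) < 1 := by
  classical
  obtain ⟨i, hi⟩ := hpq
  rw [← mul_prod_erase _ _ (mem_univ i)]
  calc hellingerAffinity (p i) (q i) * ∏ j ∈ univ.erase i, hellingerAffinity (p j) (q j)
      ≤ hellingerAffinity (p i) (q i) :=
        mul_le_of_le_one_right (hellingerAffinity_nonneg _ _) (prod_le_one
          (fun j _ => hellingerAffinity_nonneg _ _)
          fun j _ => hellingerAffinity_le_one (hp0 j) (hq0 j) (hp1 j) (hq1 j))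
    _ < 1 := hellingerAffinity_lt_one (hp0 i) (hq0 i) (hp1 i) (hq1 i) hi

end Hellinger

lemma lintegral_sqrt_div_comp {Ω α : Type*} [MeasurableSpace Ω] [Fintype α] [MeasurableSpace α]
    [MeasurableSingletonClass α] {P : Measure Ω} {p q : α → ℝ} {Y : Ω → α} (hY : Measurable Y)
    (hlaw : ∀ k, P {x | Y x = k} = ENNReal.ofReal (q k)) (hp : ∀ k, 0 ≤ p k) (hq : ∀ k, 0 < q k) :
    ∫⁻ x, ENNReal.ofReal √(p (Y x) / q (Y x)) ∂P = ENNReal.ofReal (hellingerAffinity p q) := by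
  have hterm : ∀ k, ENNReal.ofReal √(p k / q k) * P {x | Y x = k} =
      ENNReal.ofReal √(p k * q k) := by
    intro k
    rw [hlaw, ← ENNReal.ofReal_mul (Real.sqrt_nonneg _)]
    congr 1
    calc √(p k / q k) * q k = √(p k / q k) * √(q k * q k) := by rw [Real.sqrt_mul_self (hq k).le]
      _ = √(p k * q k) := by
        rw [← Real.sqrt_mul (div_nonneg (hp k) (hq k).le)]
        congr 1
        field_simp
  have hmap := lintegral_map (μ := P) (f := fun k => ENNReal.ofReal √(p k / q k))
    (measurable_of_finite _) hY
  rw [← hmap, lintegral_fintype, hellingerAffinity,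
    ENNReal.ofReal_sum_of_nonneg fun k _ => Real.sqrt_nonneg _]
  refine sum_congr rfl fun k _ => ?_
  rw [Measure.map_apply hY (measurableSet_singleton k), ← hterm]
  rfl

section LikelihoodRatio

variable {Ω ι α : Type*} [Fintype ι] {p q : ι → α → ℝ} {X : ι → ℕ → Ω → α}

noncomputable def sqrtLikelihoodRatio (p q : ι → α → ℝ) (X : ι → ℕ → Ω → α) (t : ℕ) (x : Ω) : ℝ :=
  ∏ a ∈ univ ×ˢ range t, √(p a.1 (X a.1 a.2 x) / q a.1 (X a.1 a.2 x))

lemma sqrtLikelihoodRatio_pos (hp : ∀ i k, 0 < p i k) (hq : ∀ i k, 0 < q i k) (t : ℕ) (x : Ω) :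
    0 < sqrtLikelihoodRatio p q X t x :=
  prod_pos fun _ _ => Real.sqrt_pos.2 (div_pos (hp _ _) (hq _ _))

lemma log_sqrtLikelihoodRatio (hp : ∀ i k, 0 < p i k) (hq : ∀ i k, 0 < q i k) (t : ℕ) (x : Ω) :
    Real.log (sqrtLikelihoodRatio p q X t x) =
      (∑ i, ∑ s ∈ range t, Real.log (p i (X i s x) / q i (X i s x))) / 2 := by
  have hratio : ∀ i s, 0 < p i (X i s x) / q i (X i s x) := fun i s => div_pos (hp _ _) (hq _ _)
  rw [sqrtLikelihoodRatio, Real.log_prod fun a _ => (Real.sqrt_pos.2 (hratio _ _)).ne',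
    sum_product, sum_div]
  simp only [Real.log_sqrt (hratio _ _).le, sum_div]

variable [MeasurableSpace Ω] [Fintype α] [MeasurableSpace α] [MeasurableSingletonClass α]

lemma measurable_sqrtLikelihoodRatio (hX : ∀ i t, Measurable (X i t)) (t : ℕ) :
    Measurable (sqrtLikelihoodRatio p q X t) :=
  Finset.measurable_prod _ fun (a : ι × ℕ) _ =>
    (measurable_of_finite fun k => √(p a.1 k / q a.1 k)).comp (hX a.1 a.2)

lemma lintegral_sqrtLikelihoodRatio {P : Measure Ω} (hX_meas : ∀ i t, Measurable (X i t))
    (hX_indep : iIndepFun (fun a : ι × ℕ => X a.1 a.2) P)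
    (hlaw : ∀ i t k, P {x | X i t x = k} = ENNReal.ofReal (q i k))
    (hp : ∀ i k, 0 ≤ p i k) (hq : ∀ i k, 0 < q i k) (t : ℕ) :
    ∫⁻ x, ENNReal.ofReal (sqrtLikelihoodRatio p q X t x) ∂P =
      ENNReal.ofReal ((∏ i, hellingerAffinity (p i) (q i)) ^ t) := by
  have hindep := hX_indep.comp (fun a k => ENNReal.ofReal √(p a.1 k / q a.1 k))
    fun _ => measurable_of_finite _
  have hprod := lintegral_prod_eq_prod_lintegral_of_indepFun (univ ×ˢ range t) _ hindep
    fun a => (measurable_of_finite _).comp (hX_meas a.1 a.2)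
  simp only [Function.comp_apply] at hprod
  simp_rw [sqrtLikelihoodRatio, ENNReal.ofReal_prod_of_nonneg fun _ _ => Real.sqrt_nonneg _]
  rw [hprod, prod_product]
  simp_rw [lintegral_sqrt_div_comp (hX_meas _ _) (hlaw _ _) (hp _) (hq _)]
  rw [← prod_pow, ENNReal.ofReal_prod_of_nonneg fun i _ => pow_nonneg
    (hellingerAffinity_nonneg _ _) _]
  simp [ENNReal.ofReal_pow (hellingerAffinity_nonneg _ _)]

end LikelihoodRatio

lemma tendsto_exp_mul_log_mul_pow (r : ℝ) (k : ℕ) {ρ : ℝ} (hρ0 : 0 < ρ) (hρ1 : ρ < 1) :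
    Tendsto (fun t : ℕ => Real.exp (r * Real.log (t + k)) * ρ ^ t) atTop (nhds 0) := by
  set Q := ⌈r⌉₊
  have hpoly : Tendsto (fun t : ℕ => ((t + k : ℕ) : ℝ) ^ Q * ρ ^ t) atTop (nhds 0) := by
    have h := ((tendsto_pow_const_mul_const_pow_of_abs_lt_one Q (abs_lt.2 ⟨by linarith, hρ1⟩)).comp
      (tendsto_add_atTop_nat k)).mul_const (ρ ^ k)⁻¹
    rw [zero_mul] at h
    refine h.congr fun t => ?_
    simp only [Function.comp_apply, pow_add]
    field_simp
  refine squeeze_zero' (.of_forall fun t => by positivity)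
    (eventually_atTop.2 ⟨1, fun t ht => ?_⟩) hpoly
  have ht : (0 : ℝ) < t + k := by positivity
  have hlog : 0 ≤ Real.log (t + k) := by exact_mod_cast Real.log_natCast_nonneg (t + k)
  gcongr
  calc Real.exp (r * Real.log (t + k)) ≤ Real.exp (Q * Real.log (t + k)) := by
        gcongr; exact Nat.le_ceil r
    _ = ((t + k : ℕ) : ℝ) ^ Q := by
        rw [Real.exp_nat_mul, Real.exp_log ht]; push_cast; ring

theorem tendsto_measure_lt_of_log_le {Ω : Type*} [MeasurableSpace Ω] (P : Measure Ω)
    {Y Z : ℕ → Ω → ℝ} {ρ a b c ε : ℝ} {k : ℕ} (hρ0 : 0 < ρ) (hρ1 : ρ < 1) (hc : 0 < c)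
    (hε : 0 < ε) (hZ : ∀ t x, 0 < Z t x) (hZ_meas : ∀ t, Measurable (Z t))
    (hZ_int : ∀ t, ∫⁻ x, ENNReal.ofReal (Z t x) ∂P ≤ ENNReal.ofReal (ρ ^ t))
    (hY : ∀ t x, Real.log (Y t x) ≤ c * Real.log (Z t x) + a * Real.log (t + k) + b) :
    Tendsto (fun t => P {x | ε < Y t x}) atTop (nhds 0) := by
  set e : ℕ → ℝ := fun t => Real.exp ((Real.log ε - a * Real.log (t + k) - b) / c)
  have hsub : ∀ t, {x | ε < Y t x} ⊆ {x | ENNReal.ofReal (e t) ≤ ENNReal.ofReal (Z t x)} := by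
    intro t x hx
    have hlog := (Real.log_lt_log hε hx).trans_le (hY t x)
    refine ENNReal.ofReal_le_ofReal ?_
    rw [← Real.exp_log (hZ t x)]
    exact Real.exp_le_exp.2 ((div_le_iff₀ hc).2 (by linarith))
  have hbound : ∀ t, P {x | ε < Y t x} ≤ ENNReal.ofReal
      (Real.exp ((b - Real.log ε) / c) * (Real.exp (a / c * Real.log (t + k)) * ρ ^ t)) := by
    intro t
    have he : ρ ^ t / e t =
        Real.exp ((b - Real.log ε) / c) * (Real.exp (a / c * Real.log (t + k)) * ρ ^ t) := by
      simp only [e, div_eq_mul_inv, ← Real.exp_neg, ← mul_assoc, ← Real.exp_add]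
      rw [mul_comm]
      congr 2
      ring
    calc P {x | ε < Y t x} ≤ P {x | ENNReal.ofReal (e t) ≤ ENNReal.ofReal (Z t x)} :=
          measure_mono (hsub t)
      _ ≤ (∫⁻ x, ENNReal.ofReal (Z t x) ∂P) / ENNReal.ofReal (e t) :=
          meas_ge_le_lintegral_div (hZ_meas t).ennreal_ofReal.aemeasurable
            (by simp [e, Real.exp_pos]) ENNReal.ofReal_ne_top
      _ ≤ ENNReal.ofReal (ρ ^ t) / ENNReal.ofReal (e t) := by gcongr; exact hZ_int t
      _ = _ := by rw [← ENNReal.ofReal_div_of_pos (Real.exp_pos _), he]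
  have hlim := ENNReal.tendsto_ofReal
    ((tendsto_exp_mul_log_mul_pow (a / c) k hρ0 hρ1).const_mul (Real.exp ((b - Real.log ε) / c)))
  rw [mul_zero, ENNReal.ofReal_zero] at hlim
  exact tendsto_of_tendsto_of_tendsto_of_le_of_le tendsto_const_nhds hlim (fun _ => zero_le)
    hbound

theorem log_belief_le {n Ω : Type*} [Fintype n] [DecidableEq n] {K : ℕ} {A : Matrix n n ℝ}
    {πθ πstar : n → Fin K → ℝ} {X : n → ℕ → Ω → Fin K} {μ : ℕ → n → Ω → ℝ} {C δ : ℝ}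
    (hδ : 0 < δ) (hδθ : ∀ j k, δ ≤ πθ j k) (hθ1 : ∀ j k, πθ j k ≤ 1)
    (hstar_pos : ∀ j k, 0 < πstar j k) (hstar_sum : ∀ j, ∑ k, πstar j k = 1)
    (hμ0 : ∀ i x, μ 0 i x = 1)
    (hμ : ∀ t i x, μ (t + 1) i x = certainLikelihood (πθ i) (X i) t x * ∏ j, μ t j x ^ A i j)
    (hC : ∀ i t, ∑ s ∈ range t, ∑ j, |(A ^ s) i j - (Fintype.card n : ℝ)⁻¹| ≤ C)
    (t : ℕ) (i : n) (x : Ω) :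
    Real.log (μ t i x) ≤
      2 * (Fintype.card n : ℝ)⁻¹ * Real.log (sqrtLikelihoodRatio πθ πstar X t x) +
        ((K - 1 : ℕ) + C) * Real.log (t + K) + C * Real.log δ⁻¹ := by
  have hθ : ∀ j k, 0 < πθ j k := fun j k => hδ.trans_le (hδθ j k)
  have hcard : (Fintype.card n : ℝ) ≠ 0 := by
    have : Nonempty n := ⟨i⟩
    exact_mod_cast Fintype.card_ne_zero
  have hb : 0 ≤ Real.log (t + K) - Real.log δ := by
    have := Real.log_nonpos hδ.le ((hδθ i (X i 0 x)).trans (hθ1 _ _))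
    have : 0 ≤ Real.log (t + K) := by exact_mod_cast Real.log_natCast_nonneg (t + K)
    linarith
  have hloglinear := log_le_of_loglinear (μ := fun t j => μ t j x)
    (u := fun s j => certainLikelihood (πθ j) (X j) s x)
    (fun s j => certainLikelihood_pos _ _ _ (hθ j) s) (hμ0 · x) (hμ · · x) (hC i t) hb
    fun s hs j => abs_log_certainLikelihood_le _ _ _ hδ (hδθ j) (hθ1 j) hs
  have hsum : ∀ j, ∑ s ∈ range t, Real.log (certainLikelihood (πθ j) (X j) s x) ≤
      (K - 1 : ℕ) * Real.log (t + K) +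
        ∑ s ∈ range t, Real.log (πθ j (X j s x) / πstar j (X j s x)) := fun j =>
    sum_log_certainLikelihood_le _ _ (hθ j) (hstar_pos j) (hstar_sum j) t
  calc Real.log (μ t i x)
      ≤ (Fintype.card n : ℝ)⁻¹ * ∑ j, ∑ s ∈ range t, Real.log (certainLikelihood (πθ j) (X j) s x)
        + C * (Real.log (t + K) - Real.log δ) := hloglinear
    _ ≤ (Fintype.card n : ℝ)⁻¹ * ∑ j, ((K - 1 : ℕ) * Real.log (t + K) +
          ∑ s ∈ range t, Real.log (πθ j (X j s x) / πstar j (X j s x)))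
        + C * (Real.log (t + K) - Real.log δ) := by gcongr with j; exact hsum j
    _ = _ := by
        rw [log_sqrtLikelihoodRatio hθ hstar_pos, Real.log_inv, sum_add_distrib, sum_const,
          card_univ, nsmul_eq_mul]
        field_simp
        ring

theorem loglinear_certain_beliefs_tendsto_zero_in_prob_general
    {Ω : Type*} [MeasurableSpace Ω] (P : Measure Ω)
    (m : ℕ) (K : ℕ) (hK : 2 ≤ K)
    (A : Matrix (Fin m) (Fin m) ℝ)
    (hA_nonneg : ∀ i j, 0 ≤ A i j)
    (hA_row : ∀ i, ∑ j, A i j = 1) (hA_col : ∀ j, ∑ i, A i j = 1)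
    (hA_prim : ∃ N : ℕ, 1 ≤ N ∧ ∀ i j, 0 < (A ^ N) i j)
    (πstar πθ : Fin m → Fin K → ℝ)
    (hstar_pos : ∀ i k, 0 < πstar i k) (hstar_sum : ∀ i, ∑ k, πstar i k = 1)
    (hθ_pos : ∀ i k, 0 < πθ i k) (hθ_sum : ∀ i, ∑ k, πθ i k = 1)
    (X : Fin m → ℕ → Ω → Fin K) (hX_meas : ∀ i t, Measurable (X i t))
    (hX_indep : iIndepFun
      (fun p : Fin m × ℕ => X p.1 p.2) P)
    (hX_law : ∀ i t k, P {x | X i t x = k} = ENNReal.ofReal (πstar i k))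
    (μ : ℕ → Fin m → Ω → ℝ)
    (hμ0 : ∀ i x, μ 0 i x = 1)
    (hμ : ∀ t i x, μ (t + 1) i x =
      πθ i (X i t x) * (((t + 1 + K - 1 : ℕ)) : ℝ) /
          (((sigCount (X i) (X i t x) t x + 1 : ℕ)) : ℝ) *
        ∏ j, (μ t j x) ^ (A i j))
    (hmismatch : ∃ i, πθ i ≠ πstar i) :
    ∀ i : Fin m, ∀ ε : ℝ, 0 < ε →
      Tendsto (fun t => P {x | ε < μ t i x}) atTop (nhds 0) := by
  intro i ε hε
  have : Nonempty (Fin m) := ⟨i⟩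
  have : Nonempty (Fin K) := ⟨⟨0, by omega⟩⟩
  obtain ⟨N, -, hN⟩ := hA_prim
  obtain ⟨C, hC⟩ := exists_sum_abs_pow_sub_inv_card_le
    (mem_doublyStochastic_iff_sum.2 ⟨hA_nonneg, hA_row, hA_col⟩) hN
  obtain ⟨⟨j₀, k₀⟩, hδ⟩ := Finite.exists_min fun a : Fin m × Fin K => πθ a.1 a.2
  have hθ1 : ∀ j k, πθ j k ≤ 1 := fun j k =>
    hθ_sum j ▸ single_le_sum (fun k _ => (hθ_pos j k).le) (mem_univ k)
  have hbelief := log_belief_le (hθ_pos j₀ k₀) (fun j k => hδ (j, k)) hθ1 hstar_pos hstar_sum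
    hμ0 hμ hC
  exact tendsto_measure_lt_of_log_le P
    (prod_pos fun j _ => hellingerAffinity_pos (hθ_pos j) (hstar_pos j))
    (prod_hellingerAffinity_lt_one (fun j k => (hθ_pos j k).le) (fun j k => (hstar_pos j k).le)
      hθ_sum hstar_sum hmismatch) (by positivity) hε (sqrtLikelihoodRatio_pos hθ_pos hstar_pos)
    (measurable_sqrtLikelihoodRatio hX_meas)
    (fun t => (lintegral_sqrtLikelihoodRatio hX_meas hX_indep hX_law
      (fun j k => (hθ_pos j k).le) hstar_pos t).le) (hbelief · i)

/-- If at least one certain agent has `π_{iθ} ≠ π*_i`, then for every agent the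
log-linear beliefs converge to `0` in probability: `P(μ_{it} > ε) → 0` for all `ε > 0`. -/
theorem loglinear_certain_beliefs_tendsto_zero_in_prob
    {Ω : Type*} [MeasurableSpace Ω] (P : Measure Ω) [IsProbabilityMeasure P]
    (m : ℕ) (hm : 1 ≤ m) (K : ℕ) (hK : 2 ≤ K)
    (A : Matrix (Fin m) (Fin m) ℝ)
    (hA_nonneg : ∀ i j, 0 ≤ A i j)
    (hA_row : ∀ i, ∑ j, A i j = 1) (hA_col : ∀ j, ∑ i, A i j = 1)
    (hA_prim : ∃ N : ℕ, 1 ≤ N ∧ ∀ i j, 0 < (A ^ N) i j)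
    (πstar πθ : Fin m → Fin K → ℝ)
    (hstar_pos : ∀ i k, 0 < πstar i k) (hstar_sum : ∀ i, ∑ k, πstar i k = 1)
    (hθ_pos : ∀ i k, 0 < πθ i k) (hθ_sum : ∀ i, ∑ k, πθ i k = 1)
    (X : Fin m → ℕ → Ω → Fin K) (hX_meas : ∀ i t, Measurable (X i t))
    (hX_indep : iIndepFun
      (fun p : Fin m × ℕ => X p.1 p.2) P)
    (hX_law : ∀ i t k, P {x | X i t x = k} = ENNReal.ofReal (πstar i k))
    (μ : ℕ → Fin m → Ω → ℝ)
    (hμ0 : ∀ i x, μ 0 i x = 1)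
    (hμ : ∀ t i x, μ (t + 1) i x =
      πθ i (X i t x) * (((t + 1 + K - 1 : ℕ)) : ℝ) /
          (((sigCount (X i) (X i t x) t x + 1 : ℕ)) : ℝ) *
        ∏ j, (μ t j x) ^ (A i j))
    (hmismatch : ∃ i, πθ i ≠ πstar i) :
    ∀ i : Fin m, ∀ ε : ℝ, 0 < ε →
      Tendsto (fun t => P {x | ε < μ t i x}) atTop (nhds 0) :=
  loglinear_certain_beliefs_tendsto_zero_in_prob_general P m K hK A hA_nonneg hA_row hA_col hA_prim
    πstar πθ hstar_pos hstar_sum hθ_pos hθ_sum X hX_meas hX_indep hX_law μ hμ0 hμ hmismatch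
end

section
/- Suppose the network is fully connected, i.e., A_{ij} = 1/m for all i, j, and there exists at least one agent i with π_{iθ} ≠ π*_i. Then for every agent i the DeGroot-style belief μ_{it} converges to 0 in probability as t → ∞. -/
/-!
Let `S t = ∑ j, μ t j / m` be the average belief. The update rule gives `S (t + 1) = A t * S t`,
where `A t` is the average of the agents' certain likelihood updates, and `μ t i ≤ m * S t`. Since
every empirical frequency `n_{jkt} / t` tends to `π*_{jk}` almost surely, `log A t` is
asymptotically `log B t`, where `B t` is the average of the likelihood ratios `π_{jθ} / π*_j`
evaluated at the signals of time `t`. The `B t` are i.i.d. with mean `1` and, because some model is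
mismatched, not almost surely constant; the strong law and strict Jensen give
`log S t / t → E[log B 0] < 0`. So `S t → 0` almost surely, hence every `μ t i → 0` in probability.
-/

open MeasureTheory ProbabilityTheory Filter Finset

open Real

lemma tendsto_apply_of_forall_tendsto {α κ β : Type*} [Finite κ] [TopologicalSpace β]
    {l : Filter α} {f : α → κ → β} {b : β} (h : ∀ k, Tendsto (fun a => f a k) l (nhds b))
    (v : α → κ) : Tendsto (fun a => f a (v a)) l (nhds b) :=
  fun _ hU => (eventually_all.2 fun k => h k hU).mono fun a ha => ha (v a)

lemma tendsto_mul_add_div_add_one {a : ℕ → ℝ} {p : ℝ}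
    (h : Tendsto (fun t => a t / t) atTop (nhds p)) (hp : p ≠ 0) (c : ℝ) :
    Tendsto (fun t : ℕ => p * (t + c) / (a t + 1)) atTop (nhds 1) := by
  have hinv := tendsto_one_div_atTop_nhds_zero_nat (𝕜 := ℝ)
  have hlim := ((tendsto_const_nhds (x := p)).mul
    ((tendsto_const_nhds (x := (1 : ℝ))).add (hinv.const_mul c))).div (h.add hinv)
    (by simpa using hp)
  rw [mul_zero, add_zero, mul_one, add_zero, div_self hp] at hlim
  refine hlim.congr' ((eventually_ne_atTop 0).mono fun t ht => ?_)
  have ht' : (t : ℝ) ≠ 0 := Nat.cast_ne_zero.2 ht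
  simp only [Pi.div_apply]
  field_simp

lemma abs_log_sum_mul_sub_log_sum_le {ι : Type*} {s : Finset ι} (hs : s.Nonempty)
    {z r : ι → ℝ} (hz : ∀ i ∈ s, 0 < z i) (hr : ∀ i ∈ s, 0 < r i) {b : ℝ}
    (hb : ∀ i ∈ s, |log (r i)| ≤ b) :
    |log (∑ i ∈ s, z i * r i) - log (∑ i ∈ s, z i)| ≤ b := by
  have hr_mem : ∀ i ∈ s, exp (-b) ≤ r i ∧ r i ≤ exp b := fun i hi => by
    rw [← exp_log (hr i hi)]
    exact ⟨exp_le_exp.2 (abs_le.1 (hb i hi)).1, exp_le_exp.2 (abs_le.1 (hb i hi)).2⟩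
  have hlow : exp (-b) * ∑ i ∈ s, z i ≤ ∑ i ∈ s, z i * r i := by
    rw [mul_sum]
    exact sum_le_sum fun i hi => by nlinarith [hr_mem i hi, hz i hi]
  have hup : ∑ i ∈ s, z i * r i ≤ exp b * ∑ i ∈ s, z i := by
    rw [mul_sum]
    exact sum_le_sum fun i hi => by nlinarith [hr_mem i hi, hz i hi]
  have hZ : 0 < ∑ i ∈ s, z i := sum_pos hz hs
  have hlog_low := log_le_log (by positivity) hlow
  have hlog_up := log_le_log ((mul_pos (exp_pos _) hZ).trans_le hlow) hup
  rw [log_mul (exp_pos _).ne' hZ.ne', log_exp] at hlog_low hlog_up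
  exact abs_le.2 ⟨by linarith, by linarith⟩

lemma tendsto_log_sum_mul_sub_log_sum {ι : Type*} [Fintype ι] [Nonempty ι] {z r : ℕ → ι → ℝ}
    (hz : ∀ s i, 0 < z s i) (hr : ∀ s i, 0 < r s i)
    (hr_lim : ∀ i, Tendsto (fun s => r s i) atTop (nhds 1)) :
    Tendsto (fun s => log (∑ i, z s i * r s i) - log (∑ i, z s i)) atTop (nhds 0) := by
  have hbound : Tendsto (fun s => ∑ i, |log (r s i)|) atTop (nhds 0) := by
    simpa using tendsto_finsetSum univ fun i _ =>
      ((continuousAt_log one_ne_zero).tendsto.comp (hr_lim i)).abs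
  refine squeeze_zero_norm (fun s => ?_) hbound
  exact abs_log_sum_mul_sub_log_sum_le univ_nonempty (fun i _ => hz s i) (fun i _ => hr s i)
    fun i _ => single_le_sum (f := fun i => |log (r s i)|) (fun _ _ => abs_nonneg _) (mem_univ i)

lemma tendsto_average_of_sub_tendsto_zero {a b : ℕ → ℝ} {c : ℝ}
    (hb : Tendsto (fun t => (∑ s ∈ range t, b s) / t) atTop (nhds c))
    (hab : Tendsto (fun s => a s - b s) atTop (nhds 0)) :
    Tendsto (fun t => (∑ s ∈ range t, a s) / t) atTop (nhds c) := by
  have hlim := hb.add hab.cesaro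
  rw [add_zero] at hlim
  refine hlim.congr fun t => ?_
  rw [sum_sub_distrib]
  ring

lemma tendsto_prod_zero_of_average_log_neg {a : ℕ → ℝ} (ha : ∀ s, 0 < a s) {c : ℝ}
    (h : Tendsto (fun t => (∑ s ∈ range t, log (a s)) / t) atTop (nhds c)) (hc : c < 0) :
    Tendsto (fun t => ∏ s ∈ range t, a s) atTop (nhds 0) := by
  have hsum : Tendsto (fun t => ∑ s ∈ range t, log (a s)) atTop atBot := by
    refine (tendsto_natCast_atTop_atTop.atTop_mul_neg hc h).congr'
      ((eventually_ne_atTop 0).mono fun t ht => ?_)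
    have ht' : (t : ℝ) ≠ 0 := Nat.cast_ne_zero.2 ht
    field_simp
  refine (tendsto_exp_atBot.comp hsum).congr fun t => ?_
  simp [exp_sum, exp_log (ha _)]

section DeGroot

variable {ι : Type*} [Fintype ι] {w : ι → ℝ} {ℓ μ : ℕ → ι → ℝ}

lemma sum_mul_eq_prod_of_degroot (hw : ∑ j, w j = 1) (hμ0 : ∀ i, μ 0 i = 1)
    (hμ : ∀ t i, μ (t + 1) i = ℓ t i * ∑ j, w j * μ t j) (t : ℕ) :
    ∑ j, w j * μ t j = ∏ s ∈ range t, ∑ j, w j * ℓ s j := by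
  induction t with
  | zero => simp [hμ0, hw]
  | succ t ih =>
    simp_rw [prod_range_succ, ← ih, hμ, ← mul_assoc, ← sum_mul, mul_comm]

lemma nonneg_of_degroot (hw_nonneg : ∀ j, 0 ≤ w j) (hℓ : ∀ t i, 0 ≤ ℓ t i) (hμ0 : ∀ i, μ 0 i = 1)
    (hμ : ∀ t i, μ (t + 1) i = ℓ t i * ∑ j, w j * μ t j) (t : ℕ) (i : ι) : 0 ≤ μ t i := by
  induction t generalizing i with
  | zero => simp [hμ0]
  | succ t ih =>
    rw [hμ]
    exact mul_nonneg (hℓ t i) (sum_nonneg fun j _ => mul_nonneg (hw_nonneg j) (ih j))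

lemma tendsto_zero_of_degroot (hw_nonneg : ∀ j, 0 ≤ w j) (hw : ∑ j, w j = 1)
    (hℓ : ∀ t i, 0 ≤ ℓ t i) (hμ0 : ∀ i, μ 0 i = 1)
    (hμ : ∀ t i, μ (t + 1) i = ℓ t i * ∑ j, w j * μ t j) {i : ι} (hwi : 0 < w i)
    (hprod : Tendsto (fun t => ∏ s ∈ range t, ∑ j, w j * ℓ s j) atTop (nhds 0)) :
    Tendsto (fun t => μ t i) atTop (nhds 0) := by
  have hnonneg := nonneg_of_degroot hw_nonneg hℓ hμ0 hμ
  refine squeeze_zero (fun t => hnonneg t i) (fun t => ?_) (by simpa using hprod.div_const (w i))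
  rw [le_div_iff₀' hwi, ← sum_mul_eq_prod_of_degroot hw hμ0 hμ]
  exact single_le_sum (fun j _ => mul_nonneg (hw_nonneg j) (hnonneg t j)) (mem_univ i)

end DeGroot

lemma measurable_of_degroot {Ω ι α : Type*} [MeasurableSpace Ω] [Fintype ι] [MeasurableSpace α]
    [Countable α] [MeasurableSingletonClass α] {Y : ℕ → ι → Ω → α}
    (hY : ∀ t i, Measurable (Y t i)) {F : ℕ → ι → α → Ω → ℝ}
    (hF : ∀ t i a, Measurable (F t i a)) {w : ι → ℝ} {μ : ℕ → ι → Ω → ℝ}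
    (hμ0 : ∀ i, Measurable (μ 0 i))
    (hμ : ∀ t i x, μ (t + 1) i x = F t i (Y t i x) x * ∑ j, w j * μ t j x) (t : ℕ) (i : ι) :
    Measurable (μ t i) := by
  induction t generalizing i with
  | zero => exact hμ0 i
  | succ t ih =>
    rw [show μ (t + 1) i = _ from funext (hμ t i)]
    exact ((measurable_from_prod_countable_left (f := fun p : Ω × α => F t i p.2 p.1)
      (hF t i)).comp (measurable_id.prodMk (hY t i))).mul
      (Finset.measurable_sum _ fun j _ => (ih j).const_mul (w j))

lemma integral_log_lt_zero {Ω : Type*} [MeasurableSpace Ω] {P : Measure Ω}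
    [IsProbabilityMeasure P] {Y : Ω → ℝ} (hY_pos : ∀ x, 0 < Y x) (hY : Integrable Y P)
    (hlogY : Integrable (fun x => log (Y x)) P) (hY_mean : ∫ x, Y x ∂P = 1)
    (hY_ne : ¬ Y =ᵐ[P] 1) : ∫ x, log (Y x) ∂P < 0 := by
  have hY_sub : Integrable (fun x => Y x - 1) P := hY.sub (integrable_const 1)
  have hf_nonneg : 0 ≤ fun x => Y x - 1 - log (Y x) := fun x => by
    show 0 ≤ Y x - 1 - log (Y x)
    linarith [log_le_sub_one_of_pos (hY_pos x)]
  have hsupp : 0 < P (Function.support fun x => Y x - 1 - log (Y x)) := by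
    refine pos_iff_ne_zero.2 fun hnull => hY_ne ?_
    filter_upwards [ae_iff.2 hnull] with x hx
    by_contra hx1
    linarith [log_lt_sub_one_of_pos (hY_pos x) hx1]
  have hpos := (integral_pos_iff_support_of_nonneg hf_nonneg (hY_sub.sub hlogY)).2 hsupp
  rw [integral_sub hY_sub hlogY, integral_sub hY (integrable_const 1), hY_mean] at hpos
  simpa using hpos

section Signals

variable {Ω ι α : Type*} [MeasurableSpace Ω] {P : Measure Ω} [MeasurableSpace α]

lemma integrable_comp_of_finite [Finite α] [MeasurableSingletonClass α] [IsFiniteMeasure P]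
    {Y : Ω → α} (hY : Measurable Y) (f : α → ℝ) : Integrable (fun x => f (Y x)) P :=
  (integrable_map_measure (measurable_of_finite f).aestronglyMeasurable hY.aemeasurable).1
    Integrable.of_finite

lemma integral_comp_eq_sum [Fintype α] [MeasurableSingletonClass α] [IsFiniteMeasure P]
    {Y : Ω → α} (hY : Measurable Y) (f : α → ℝ) :
    ∫ x, f (Y x) ∂P = ∑ a, P.real (Y ⁻¹' {a}) * f a := by
  rw [← integral_map hY.aemeasurable (measurable_of_finite f).aestronglyMeasurable,
    integral_fintype Integrable.of_finite]
  simp [map_measureReal_apply hY (measurableSet_singleton _)]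

def signalsAt (X : ι → ℕ → Ω → α) (t : ℕ) (x : Ω) : ι → α := fun i => X i t x

variable {X : ι → ℕ → Ω → α}

lemma measurable_signalsAt (hX : ∀ i t, Measurable (X i t)) (t : ℕ) :
    Measurable (signalsAt X t) :=
  measurable_pi_lambda _ fun i => hX i t

variable [Fintype ι]

lemma indepFun_signalsAt (hX : ∀ i t, Measurable (X i t))
    (hindep : iIndepFun (fun p : ι × ℕ => X p.1 p.2) P) {s t : ℕ} (hst : s ≠ t) :
    IndepFun (signalsAt X s) (signalsAt X t) P := by
  classical
  let S : Finset (ι × ℕ) := univ.image fun i => (i, s)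
  let T : Finset (ι × ℕ) := univ.image fun i => (i, t)
  have hST : Disjoint S T := by
    simp [S, T, disjoint_left, hst.symm]
  exact (hindep.indepFun_finset S T hST fun p => hX p.1 p.2).comp
    (φ := fun u i => u ⟨(i, s), by simp [S]⟩) (ψ := fun u i => u ⟨(i, t), by simp [T]⟩)
    (measurable_pi_lambda _ fun i => measurable_pi_apply _)
    (measurable_pi_lambda _ fun i => measurable_pi_apply _)

lemma map_signalsAt (hX : ∀ i t, Measurable (X i t))
    (hindep : iIndepFun (fun p : ι × ℕ => X p.1 p.2) P) (t : ℕ) :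
    P.map (signalsAt X t) = Measure.pi fun i => P.map (X i t) :=
  (hindep.precomp (g := fun i => (i, t)) fun _ _ h => (Prod.mk.inj h).1).map_fun_eq_pi_map
    fun i => (hX i t).aemeasurable

lemma identDistrib_signalsAt (hX : ∀ i t, Measurable (X i t))
    (hindep : iIndepFun (fun p : ι × ℕ => X p.1 p.2) P)
    (hident : ∀ i t, IdentDistrib (X i t) (X i 0) P P) (t : ℕ) :
    IdentDistrib (signalsAt X t) (signalsAt X 0) P P where
  aemeasurable_fst := (measurable_signalsAt hX t).aemeasurable
  aemeasurable_snd := (measurable_signalsAt hX 0).aemeasurable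
  map_eq := by
    simp_rw [map_signalsAt hX hindep, (hident _ t).map_eq]

lemma measure_signalsAt_preimage_singleton [MeasurableSingletonClass α]
    (hX : ∀ i t, Measurable (X i t)) (hindep : iIndepFun (fun p : ι × ℕ => X p.1 p.2) P)
    (t : ℕ) (v : ι → α) : P (signalsAt X t ⁻¹' {v}) = ∏ i, P (X i t ⁻¹' {v i}) := by
  have := hindep.isProbabilityMeasure
  rw [← Measure.map_apply (measurable_signalsAt hX t) (measurableSet_singleton v),
    map_signalsAt hX hindep, Measure.pi_singleton]
  exact prod_congr rfl fun i _ => Measure.map_apply (hX i t) (measurableSet_singleton _)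

lemma ae_tendsto_average_signalsAt [Finite α] [MeasurableSingletonClass α]
    (hX : ∀ i t, Measurable (X i t)) (hindep : iIndepFun (fun p : ι × ℕ => X p.1 p.2) P)
    (hident : ∀ i t, IdentDistrib (X i t) (X i 0) P P) (g : (ι → α) → ℝ) :
    ∀ᵐ x ∂P, Tendsto (fun t => (∑ s ∈ range t, g (signalsAt X s x)) / t) atTop
      (nhds (∫ x, g (signalsAt X 0 x) ∂P)) := by
  have := hindep.isProbabilityMeasure
  have hg := measurable_of_finite g
  exact strong_law_ae_real (fun s x => g (signalsAt X s x))
    (integrable_comp_of_finite (measurable_signalsAt hX 0) g)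
    (fun s t hst => (indepFun_signalsAt hX hindep hst).comp hg hg)
    (fun t => (identDistrib_signalsAt hX hindep hident t).comp hg)

end Signals

lemma sigCount_eq_sum_ite {Ω : Type*} {K : ℕ} (X : ℕ → Ω → Fin K) (k : Fin K) (t : ℕ) (x : Ω) :
    (sigCount X k t x : ℝ) = ∑ τ ∈ range t, if X τ x = k then 1 else 0 := by
  rw [sigCount, card_filter, Nat.cast_sum]
  exact sum_congr rfl fun τ _ => by split_ifs <;> simp

lemma measurable_sigCount {Ω : Type*} [MeasurableSpace Ω] {K : ℕ} {X : ℕ → Ω → Fin K}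
    (hX : ∀ t, Measurable (X t)) (k : Fin K) (t : ℕ) : Measurable (sigCount X k t) := by
  simp_rw [show sigCount X k t = fun x => ∑ τ ∈ range t, if X τ x = k then 1 else 0 from
    funext fun x => card_filter _ _]
  exact Finset.measurable_sum _ fun τ _ =>
    Measurable.ite (hX τ (measurableSet_singleton k)) measurable_const measurable_const

lemma ae_tendsto_sigCount_div {Ω ι : Type*} [MeasurableSpace Ω] {P : Measure Ω} [Fintype ι]
    {K : ℕ} {X : ι → ℕ → Ω → Fin K} (hX : ∀ i t, Measurable (X i t))
    (hindep : iIndepFun (fun p : ι × ℕ => X p.1 p.2) P)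
    (hident : ∀ i t, IdentDistrib (X i t) (X i 0) P P) (i : ι) (k : Fin K) :
    ∀ᵐ x ∂P, Tendsto (fun t => (sigCount (X i) k t x : ℝ) / t) atTop
      (nhds (P.real (X i 0 ⁻¹' {k}))) := by
  have := hindep.isProbabilityMeasure
  have hmean : ∫ x, (if X i 0 x = k then (1 : ℝ) else 0) ∂P = P.real (X i 0 ⁻¹' {k}) := by
    simp [integral_comp_eq_sum (hX i 0) fun a => if a = k then (1 : ℝ) else 0]
  simp_rw [← hmean, sigCount_eq_sum_ite]
  exact ae_tendsto_average_signalsAt hX hindep hident fun v => if v i = k then (1 : ℝ) else 0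

section Model

variable {Ω : Type*} {m K : ℕ} {πstar πθ : Fin m → Fin K → ℝ} {X : Fin m → ℕ → Ω → Fin K}

noncomputable def meanLikelihoodRatio (πstar πθ : Fin m → Fin K → ℝ) (v : Fin m → Fin K) : ℝ :=
  ∑ j, (1 / (m : ℝ)) * (πθ j (v j) / πstar j (v j))

/-- `certainUpdate πθ X t j k x` is the paper's `ℓ_j(t + 1, k)`: signals are indexed from `0`. -/
noncomputable def certainUpdate (πθ : Fin m → Fin K → ℝ) (X : Fin m → ℕ → Ω → Fin K) (t : ℕ)
    (j : Fin m) (k : Fin K) (x : Ω) : ℝ :=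
  πθ j k * ((t + 1 + K - 1 : ℕ) : ℝ) / ((sigCount (X j) k t x + 1 : ℕ) : ℝ)

lemma certainUpdate_eq (t : ℕ) (j : Fin m) (k : Fin K) (x : Ω) :
    certainUpdate πθ X t j k x = πθ j k * (t + K) / (sigCount (X j) k t x + 1) := by
  rw [certainUpdate, show t + 1 + K - 1 = t + K by omega]
  push_cast
  ring

lemma certainUpdate_pos (hθ_pos : ∀ i k, 0 < πθ i k) (hK : 0 < K) (t : ℕ) (j : Fin m)
    (k : Fin K) (x : Ω) : 0 < certainUpdate πθ X t j k x := by
  rw [certainUpdate_eq]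
  have := hθ_pos j k
  have : (0 : ℝ) < K := Nat.cast_pos.2 hK
  positivity

lemma meanLikelihoodRatio_pos (hm : 0 < m) (hstar_pos : ∀ i k, 0 < πstar i k)
    (hθ_pos : ∀ i k, 0 < πθ i k) (v : Fin m → Fin K) : 0 < meanLikelihoodRatio πstar πθ v :=
  have : Nonempty (Fin m) := ⟨⟨0, hm⟩⟩
  sum_pos (fun j _ => mul_pos (by positivity) (div_pos (hθ_pos j (v j)) (hstar_pos j (v j))))
    univ_nonempty

lemma exists_meanLikelihoodRatio_ne_one (hstar_pos : ∀ i k, 0 < πstar i k)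
    (hstar_sum : ∀ i, ∑ k, πstar i k = 1) (hθ_sum : ∀ i, ∑ k, πθ i k = 1)
    (hmismatch : ∃ i, πθ i ≠ πstar i) : ∃ v, meanLikelihoodRatio πstar πθ v ≠ 1 := by
  classical
  obtain ⟨i, hi⟩ := hmismatch
  obtain ⟨k₀, hk₀⟩ := Function.ne_iff.1 hi
  by_contra! hB
  have hm : (m : ℝ) ≠ 0 := Nat.cast_ne_zero.2 i.pos.ne'
  -- Changing only agent `i`'s signal leaves the mean at `1`, so `πθ i / πstar i` is constant.
  have hratio : ∀ k, πθ i k = πθ i k₀ / πstar i k₀ * πstar i k := fun k => by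
    have h := (hB (Function.update (fun _ => k₀) i k)).trans (hB fun _ => k₀).symm
    rw [meanLikelihoodRatio, meanLikelihoodRatio, ← sub_eq_zero, ← sum_sub_distrib,
      sum_eq_single i (fun j _ hj => by simp [Function.update_of_ne hj]) (by simp)] at h
    have h' : πθ i k / πstar i k = πθ i k₀ / πstar i k₀ := by simpa [hm, sub_eq_zero] using h
    rw [← h', div_mul_cancel₀ _ (hstar_pos i k).ne']
  have hc : πθ i k₀ / πstar i k₀ = 1 := by
    have := hθ_sum i
    rwa [sum_congr rfl fun k _ => hratio k, ← mul_sum, hstar_sum, mul_one] at this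
  exact hk₀ (by rw [hratio k₀, hc, one_mul])

lemma tendsto_log_mean_certainUpdate_sub_log_meanLikelihoodRatio (hm : 0 < m)
    (hstar_pos : ∀ i k, 0 < πstar i k) (hθ_pos : ∀ i k, 0 < πθ i k) {x : Ω}
    (hfreq : ∀ j k, Tendsto (fun t => (sigCount (X j) k t x : ℝ) / t) atTop (nhds (πstar j k))) :
    Tendsto (fun s => log (∑ j, 1 / (m : ℝ) * certainUpdate πθ X s j (X j s x) x) -
      log (meanLikelihoodRatio πstar πθ (signalsAt X s x))) atTop (nhds 0) := by
  have : Nonempty (Fin m) := ⟨⟨0, hm⟩⟩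
  have hK : (0 : ℝ) < K := Nat.cast_pos.2 (X ⟨0, hm⟩ 0 x).pos
  -- `certainUpdate = (πθ / πstar) * ρ`, where the frequency correction `ρ` tends to `1`.
  let ρ : ℕ → Fin m → Fin K → ℝ := fun s j k =>
    πstar j k * (s + K) / (sigCount (X j) k s x + 1)
  have hρ_pos : ∀ s j k, 0 < ρ s j k := fun s j k => by
    have := hstar_pos j k
    positivity
  refine (tendsto_log_sum_mul_sub_log_sum
    (z := fun s j => 1 / (m : ℝ) * (πθ j (X j s x) / πstar j (X j s x)))
    (r := fun s j => ρ s j (X j s x))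
    (fun s j => mul_pos (by positivity) (div_pos (hθ_pos _ _) (hstar_pos _ _)))
    (fun s j => hρ_pos _ _ _) fun j => tendsto_apply_of_forall_tendsto
      (fun k => tendsto_mul_add_div_add_one (hfreq j k) (hstar_pos j k).ne' K) _).congr
    fun s => ?_
  congr 2
  refine sum_congr rfl fun j _ => ?_
  rw [certainUpdate_eq]
  have := (hstar_pos j (X j s x)).ne'
  simp only [ρ]
  field_simp

lemma tendsto_degroot_zero_of_frequencies (hstar_pos : ∀ i k, 0 < πstar i k)
    (hθ_pos : ∀ i k, 0 < πθ i k) {μ : ℕ → Fin m → Ω → ℝ} {x : Ω} (hμ0 : ∀ i, μ 0 i x = 1)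
    (hμ : ∀ t i, μ (t + 1) i x = certainUpdate πθ X t i (X i t x) x * ∑ j, 1 / (m : ℝ) * μ t j x)
    (hfreq : ∀ j k, Tendsto (fun t => (sigCount (X j) k t x : ℝ) / t) atTop (nhds (πstar j k)))
    {c : ℝ} (hc : c < 0)
    (hlog : Tendsto (fun t => (∑ s ∈ range t, log (meanLikelihoodRatio πstar πθ (signalsAt X s x)))
      / t) atTop (nhds c)) (i : Fin m) :
    Tendsto (fun t => μ t i x) atTop (nhds 0) := by
  have hm := i.pos
  have : Nonempty (Fin m) := ⟨i⟩
  have hupdate_pos := certainUpdate_pos (X := X) hθ_pos (X i 0 x).pos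
  refine tendsto_zero_of_degroot (w := fun _ => 1 / (m : ℝ))
    (ℓ := fun t j => certainUpdate πθ X t j (X j t x) x) (μ := fun t j => μ t j x)
    (fun _ => by positivity) (by simp [hm.ne']) (fun t j => (hupdate_pos _ _ _ _).le) hμ0 hμ
    (by positivity) ?_
  exact tendsto_prod_zero_of_average_log_neg
    (fun s => sum_pos (fun j _ => mul_pos (by positivity) (hupdate_pos _ _ _ _)) univ_nonempty)
    (tendsto_average_of_sub_tendsto_zero hlog
      (tendsto_log_mean_certainUpdate_sub_log_meanLikelihoodRatio hm hstar_pos hθ_pos hfreq)) hc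

variable [MeasurableSpace Ω] {P : Measure Ω}

lemma measurable_certainUpdate (hX : ∀ i t, Measurable (X i t)) (t : ℕ) (j : Fin m) (k : Fin K) :
    Measurable (certainUpdate πθ X t j k) :=
  measurable_const.div (measurable_from_nat.comp ((measurable_sigCount (hX j) k t).add_const 1))

lemma measureReal_signal_preimage (hstar_pos : ∀ i k, 0 < πstar i k)
    (hX_law : ∀ i t k, P {x | X i t x = k} = ENNReal.ofReal (πstar i k)) (i : Fin m) (t : ℕ)
    (k : Fin K) : P.real (X i t ⁻¹' {k}) = πstar i k := by
  rw [measureReal_def, show X i t ⁻¹' {k} = {x | X i t x = k} from rfl, hX_law,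
    ENNReal.toReal_ofReal (hstar_pos i k).le]

lemma identDistrib_of_law (hX : ∀ i t, Measurable (X i t))
    (hX_law : ∀ i t k, P {x | X i t x = k} = ENNReal.ofReal (πstar i k)) (i : Fin m) (t : ℕ) :
    IdentDistrib (X i t) (X i 0) P P where
  aemeasurable_fst := (hX i t).aemeasurable
  aemeasurable_snd := (hX i 0).aemeasurable
  map_eq := Measure.ext_of_singleton fun k => by
    rw [Measure.map_apply (hX i t) (measurableSet_singleton _),
      Measure.map_apply (hX i 0) (measurableSet_singleton _)]
    exact (hX_law i t k).trans (hX_law i 0 k).symm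

lemma integral_meanLikelihoodRatio [IsProbabilityMeasure P] (hm : 0 < m)
    (hstar_pos : ∀ i k, 0 < πstar i k) (hθ_sum : ∀ i, ∑ k, πθ i k = 1)
    (hX : ∀ i t, Measurable (X i t))
    (hX_law : ∀ i t k, P {x | X i t x = k} = ENNReal.ofReal (πstar i k)) :
    ∫ x, meanLikelihoodRatio πstar πθ (signalsAt X 0 x) ∂P = 1 := by
  have hratio : ∀ j, ∫ x, πθ j (X j 0 x) / πstar j (X j 0 x) ∂P = 1 := fun j => by
    rw [integral_comp_eq_sum (hX j 0) fun k => πθ j k / πstar j k, ← hθ_sum j]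
    refine sum_congr rfl fun k _ => ?_
    rw [measureReal_signal_preimage hstar_pos hX_law, mul_div_cancel₀ _ (hstar_pos j k).ne']
  simp only [meanLikelihoodRatio, signalsAt]
  rw [integral_finsetSum _ fun j _ =>
    integrable_comp_of_finite (hX j 0) fun k => 1 / (m : ℝ) * (πθ j k / πstar j k)]
  simp [integral_const_mul, hratio, hm.ne']

lemma integral_log_meanLikelihoodRatio_neg (hstar_pos : ∀ i k, 0 < πstar i k)
    (hstar_sum : ∀ i, ∑ k, πstar i k = 1) (hθ_pos : ∀ i k, 0 < πθ i k)
    (hθ_sum : ∀ i, ∑ k, πθ i k = 1) (hX : ∀ i t, Measurable (X i t))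
    (hindep : iIndepFun (fun p : Fin m × ℕ => X p.1 p.2) P)
    (hX_law : ∀ i t k, P {x | X i t x = k} = ENNReal.ofReal (πstar i k))
    (hmismatch : ∃ i, πθ i ≠ πstar i) :
    ∫ x, log (meanLikelihoodRatio πstar πθ (signalsAt X 0 x)) ∂P < 0 := by
  have := hindep.isProbabilityMeasure
  have hm : 0 < m := hmismatch.choose.pos
  obtain ⟨v, hv⟩ := exists_meanLikelihoodRatio_ne_one hstar_pos hstar_sum hθ_sum hmismatch
  have hsignals := measurable_signalsAt hX 0
  refine integral_log_lt_zero (fun x => meanLikelihoodRatio_pos hm hstar_pos hθ_pos _)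
    (integrable_comp_of_finite hsignals _)
    (integrable_comp_of_finite hsignals fun v => log (meanLikelihoodRatio πstar πθ v))
    (integral_meanLikelihoodRatio hm hstar_pos hθ_sum hX hX_law) fun hae => ?_
  have hv_pos : P (signalsAt X 0 ⁻¹' {v}) ≠ 0 := by
    rw [measure_signalsAt_preimage_singleton hX hindep]
    exact prod_ne_zero_iff.2 fun i _ => by
      rw [show X i 0 ⁻¹' {v i} = {x | X i 0 x = v i} from rfl, hX_law]
      exact (ENNReal.ofReal_pos.2 (hstar_pos i (v i))).ne'
  refine hv_pos (measure_mono_null (fun x hx => ?_) (ae_iff.1 hae))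
  simp_all

end Model

theorem degroot_fully_connected_beliefs_tendsto_zero_in_prob_general
    {Ω : Type*} [MeasurableSpace Ω] (P : Measure Ω) [IsProbabilityMeasure P]
    (m : ℕ) (K : ℕ)
    (πstar πθ : Fin m → Fin K → ℝ)
    (hstar_pos : ∀ i k, 0 < πstar i k) (hstar_sum : ∀ i, ∑ k, πstar i k = 1)
    (hθ_pos : ∀ i k, 0 < πθ i k) (hθ_sum : ∀ i, ∑ k, πθ i k = 1)
    (X : Fin m → ℕ → Ω → Fin K) (hX_meas : ∀ i t, Measurable (X i t))
    (hX_indep : iIndepFun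
      (fun p : Fin m × ℕ => X p.1 p.2) P)
    (hX_law : ∀ i t k, P {x | X i t x = k} = ENNReal.ofReal (πstar i k))
    (μ : ℕ → Fin m → Ω → ℝ)
    (hμ0 : ∀ i x, μ 0 i x = 1)
    (hμ : ∀ t i x, μ (t + 1) i x =
      πθ i (X i t x) * (((t + 1 + K - 1 : ℕ)) : ℝ) /
          (((sigCount (X i) (X i t x) t x + 1 : ℕ)) : ℝ) *
        ∑ j, (1 / (m : ℝ)) * μ t j x)
    (hmismatch : ∃ i, πθ i ≠ πstar i) :
    ∀ i : Fin m, ∀ ε : ℝ, 0 < ε →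
      Tendsto (fun t => P {x | ε < |μ t i x - 0|}) atTop (nhds 0) := by
  intro i ε hε
  have hident := identDistrib_of_law hX_meas hX_law
  have hμ_meas : ∀ t, Measurable (μ t i) := fun t =>
    measurable_of_degroot (fun t j => hX_meas j t) (measurable_certainUpdate hX_meas)
      (fun j => by simp only [funext (hμ0 j)]; exact measurable_const) hμ t i
  have hμ_ae : ∀ᵐ x ∂P, Tendsto (fun t => μ t i x) atTop (nhds 0) := by
    filter_upwards [ae_all_iff.2 fun j => ae_all_iff.2 fun k =>
        ae_tendsto_sigCount_div hX_meas hX_indep hident j k,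
      ae_tendsto_average_signalsAt hX_meas hX_indep hident
        fun v => log (meanLikelihoodRatio πstar πθ v)] with x hfreq hlog
    simp_rw [measureReal_signal_preimage hstar_pos hX_law] at hfreq
    exact tendsto_degroot_zero_of_frequencies hstar_pos hθ_pos (hμ0 · x) (hμ · · x) hfreq
      (integral_log_meanLikelihoodRatio_neg hstar_pos hstar_sum hθ_pos hθ_sum hX_meas hX_indep
        hX_law hmismatch) hlog i
  refine tendsto_of_tendsto_of_tendsto_of_le_of_le tendsto_const_nhds
    (tendstoInMeasure_iff_dist.1
      (tendstoInMeasure_of_tendsto_ae (fun t => (hμ_meas t).aestronglyMeasurable) hμ_ae) ε hε)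
    (fun _ => zero_le) fun t => measure_mono fun x (hx : ε < |μ t i x - 0|) => ?_
  simpa [Real.dist_eq] using hx.le

/-- On the fully connected network, with certain models and at least one agent whose
model is mismatched with the ground truth, the DeGroot-style beliefs converge
to `0` in probability. -/
theorem degroot_fully_connected_beliefs_tendsto_zero_in_prob
    {Ω : Type*} [MeasurableSpace Ω] (P : Measure Ω) [IsProbabilityMeasure P]
    (m : ℕ) (hm : 1 ≤ m) (K : ℕ) (hK : 2 ≤ K)
    (πstar πθ : Fin m → Fin K → ℝ)
    (hstar_pos : ∀ i k, 0 < πstar i k) (hstar_sum : ∀ i, ∑ k, πstar i k = 1)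
    (hθ_pos : ∀ i k, 0 < πθ i k) (hθ_sum : ∀ i, ∑ k, πθ i k = 1)
    (X : Fin m → ℕ → Ω → Fin K) (hX_meas : ∀ i t, Measurable (X i t))
    (hX_indep : iIndepFun
      (fun p : Fin m × ℕ => X p.1 p.2) P)
    (hX_law : ∀ i t k, P {x | X i t x = k} = ENNReal.ofReal (πstar i k))
    (μ : ℕ → Fin m → Ω → ℝ)
    (hμ0 : ∀ i x, μ 0 i x = 1)
    (hμ : ∀ t i x, μ (t + 1) i x =
      πθ i (X i t x) * (((t + 1 + K - 1 : ℕ)) : ℝ) /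
          (((sigCount (X i) (X i t x) t x + 1 : ℕ)) : ℝ) *
        ∑ j, (1 / (m : ℝ)) * μ t j x)
    (hmismatch : ∃ i, πθ i ≠ πstar i) :
    ∀ i : Fin m, ∀ ε : ℝ, 0 < ε →
      Tendsto (fun t => P {x | ε < |μ t i x - 0|}) atTop (nhds 0) :=
  degroot_fully_connected_beliefs_tendsto_zero_in_prob_general P m K πstar πθ hstar_pos hstar_sum
    hθ_pos hθ_sum X hX_meas hX_indep hX_law μ hμ0 hμ hmismatch
end
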